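/- For any finite abstract simplicial complex K, the topological complexity of the geometric realization satisfies TC(|K|) ≤ TC(K), where the right-hand side is the discrete topological complexity. -/

import Mathlib

attribute [local instance] Classical.decEq

/-- An abstract simplicial complex on vertex set `V`. -/
structure SC (V : Type) where
  faces : Set (Finset V)
  down_closed : ∀ {σ τ : Finset V}, σ ∈ faces → τ ⊆ σ → τ.Nonempty → τ ∈ faces

/-- A vertex map inducing a simplicial map `K → L`. -/
def IsSimplicialMap {V W : Type} (K : SC V) (L : SC W) (f : V → W) : Prop :=
  ∀ σ ∈ K.faces, σ.image f ∈ L.faces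

/-- Two maps are contiguous: for each simplex, the union of images is a simplex. -/
def Contiguous {V W : Type} (K : SC V) (L : SC W) (f g : V → W) : Prop :=
  ∀ σ ∈ K.faces, σ.image f ∪ σ.image g ∈ L.faces

/-- Being in the same contiguity class: connected by a finite chain of contiguous maps. -/
def ContigClass {V W : Type} (K : SC V) (L : SC W) : (V → W) → (V → W) → Prop :=
  Relation.ReflTransGen (Contiguous K L)

/-- The categorical product of two simplicial complexes. -/
def prodSC {V W : Type} (K : SC V) (L : SC W) : SC (V × W) where
  faces := {σ | σ.image Prod.fst ∈ K.faces ∧ σ.image Prod.snd ∈ L.faces}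
  down_closed := fun hσ hτσ hne =>
    ⟨K.down_closed hσ.1 (Finset.image_subset_image hτσ) (hne.image _),
     L.down_closed hσ.2 (Finset.image_subset_image hτσ) (hne.image _)⟩

/-- `Ω` is a Farber subcomplex of `K Π K`: a subcomplex admitting a simplicial map
`s : Ω → K` with `Δ ∘ s` in the contiguity class of the inclusion. -/
def IsFarber {V : Type} (K : SC V) (Ω : SC (V × V)) : Prop :=
  Ω.faces ⊆ (prodSC K K).faces ∧
  ∃ s : V × V → V, IsSimplicialMap Ω K s ∧
    ContigClass Ω (prodSC K K) (fun p => (s p, s p)) id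

/-- `K Π K` is covered by `n + 1` Farber subcomplexes. -/
def TCle {V : Type} (K : SC V) (n : ℕ) : Prop :=
  ∃ Ω : Fin (n + 1) → SC (V × V), (∀ i, IsFarber K (Ω i)) ∧
    ∀ σ ∈ (prodSC K K).faces, ∃ i, σ ∈ (Ω i).faces

/-- Discrete topological complexity. -/
noncomputable def TCdisc {V : Type} (K : SC V) : ℕ∞ :=
  sInf {n : ℕ∞ | ∃ m : ℕ, n = (m : ℕ∞) ∧ TCle K m}

/-- A categorical subcomplex: the inclusion is in the contiguity class of a constant map
at a vertex of `K`. -/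
def IsCategorical {V : Type} (K : SC V) (L : SC V) : Prop :=
  L.faces ⊆ K.faces ∧ ∃ v : V, {v} ∈ K.faces ∧ ContigClass L K id (fun _ => v)

/-- `K` is covered by `n + 1` categorical subcomplexes. -/
def scatLe {V : Type} (K : SC V) (n : ℕ) : Prop :=
  ∃ L : Fin (n + 1) → SC V, (∀ i, IsCategorical K (L i)) ∧
    ∀ σ ∈ K.faces, ∃ i, σ ∈ (L i).faces

/-- Normalized simplicial LS-category. -/
noncomputable def scat {V : Type} (K : SC V) : ℕ∞ :=
  sInf {n : ℕ∞ | ∃ m : ℕ, n = (m : ℕ∞) ∧ scatLe K m}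

/-- The preimage subcomplex of a subcomplex `Ω` under a vertex map `f`,
inside an ambient complex `M`. -/
def preimSC {V W : Type} (M : SC W) (Ω : SC V) (f : W → V) : SC W where
  faces := {τ | τ ∈ M.faces ∧ τ.image f ∈ Ω.faces}
  down_closed := fun hσ hτσ hne =>
    ⟨M.down_closed hσ.1 hτσ hne,
     Ω.down_closed hσ.2 (Finset.image_subset_image hτσ) (hne.image _)⟩

/-- `K` and `L` have the same strong homotopy type. -/
def StrongEquiv {V W : Type} (K : SC V) (L : SC W) : Prop :=
  ∃ (φ : V → W) (ψ : W → V), IsSimplicialMap K L φ ∧ IsSimplicialMap L K ψ ∧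
    ContigClass L L (φ ∘ ψ) id ∧ ContigClass K K (ψ ∘ φ) id

/-- `K` is edge-path connected. -/
def EdgeConn {V : Type} (K : SC V) : Prop :=
  ∀ v w : V, {v} ∈ K.faces → {w} ∈ K.faces →
    Relation.ReflTransGen (fun a b => ({a, b} : Finset V) ∈ K.faces) v w

/-- `K` is strongly collapsible: the identity is in the contiguity class of a constant map. -/
def StronglyCollapsible {V : Type} (K : SC V) : Prop :=
  ∃ v : V, {v} ∈ K.faces ∧ ContigClass K K id (fun _ => v)
open unitInterval in
/-- `f` and `g` are homotopic: there is a continuous homotopy between them. -/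
def Htpy {A B : Type} [TopologicalSpace A] [TopologicalSpace B] (f g : A → B) : Prop :=
  ∃ H : C(A × I, B), (∀ a, H (a, 0) = f a) ∧ (∀ a, H (a, 1) = g a)

/-- The Švarc genus of `f` is at most `n`: the codomain has an open cover by `n + 1`
sets each admitting a continuous strict local section. -/
def SecatLe {X Y : Type} [TopologicalSpace X] [TopologicalSpace Y] (f : X → Y) (n : ℕ) : Prop :=
  ∃ V : Fin (n + 1) → Set Y, (∀ i, IsOpen (V i)) ∧ (∀ y, ∃ i, y ∈ V i) ∧
    ∀ i, ∃ s : (V i) → X, Continuous s ∧ ∀ y : V i, f (s y) = (y : Y)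

/-- The homotopic Švarc genus of `f` is at most `n`: open cover by `n + 1` sets each
admitting a continuous local homotopic section. -/
def HSecatLe {X Y : Type} [TopologicalSpace X] [TopologicalSpace Y] (f : X → Y) (n : ℕ) : Prop :=
  ∃ V : Fin (n + 1) → Set Y, (∀ i, IsOpen (V i)) ∧ (∀ y, ∃ i, y ∈ V i) ∧
    ∀ i, ∃ s : (V i) → X, Continuous s ∧
      Htpy (fun y : V i => f (s y)) (fun y : V i => (y : Y))

/-- The Švarc genus. -/
noncomputable def secat {X Y : Type} [TopologicalSpace X] [TopologicalSpace Y]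
    (f : X → Y) : ℕ∞ :=
  sInf {n : ℕ∞ | ∃ m : ℕ, n = (m : ℕ∞) ∧ SecatLe f m}

/-- The homotopic Švarc genus. -/
noncomputable def hsecat {X Y : Type} [TopologicalSpace X] [TopologicalSpace Y]
    (f : X → Y) : ℕ∞ :=
  sInf {n : ℕ∞ | ∃ m : ℕ, n = (m : ℕ∞) ∧ HSecatLe f m}

open unitInterval in
/-- The homotopy lifting property with respect to all spaces. -/
def IsFibration {E B : Type} [TopologicalSpace E] [TopologicalSpace B] (p : E → B) : Prop :=
  ∀ (Z : Type) (_ : TopologicalSpace Z) (H : C(Z × I, B)) (h : Z → E), Continuous h →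
    (∀ z, p (h z) = H (z, 0)) →
    ∃ G : C(Z × I, E), (∀ z, G (z, 0) = h z) ∧ ∀ q, p (G q) = H q

open unitInterval in
/-- The path fibration `PX → X × X`, sending a path to its endpoints. -/
def pathFib (X : Type) [TopologicalSpace X] : C(I, X) → X × X :=
  fun γ => (γ 0, γ 1)

/-- Farber's (normalized) topological complexity of a space. -/
noncomputable def TCtop (X : Type) [TopologicalSpace X] : ℕ∞ :=
  secat (pathFib X)

/-- The geometric realization of a finite abstract simplicial complex `K`,
as a subspace of `V → ℝ`. -/
def geomReal {V : Type} [Fintype V] (K : SC V) : Set (V → ℝ) :=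
  {f | (∀ v, 0 ≤ f v) ∧ (∑ v, f v) = 1 ∧ ∃ σ ∈ K.faces, ∀ v, f v ≠ 0 → v ∈ σ}

/-!
Vertex maps act on barycentric coordinates by pushforward (`FunOnFinite.map`), so simplicial maps
realize as continuous maps and contiguous maps are joined by straight-line homotopies. The map
`(x, y) ↦ x ⊗ y` sends `|K| × |K|` into `|K Π K|`, and the two marginals of `x ⊗ y` are `x` and `y`.

Let `Ω` be a Farber subcomplex with section `s`, and let `e(h)` be the least mass that
`h ∈ |K Π K|` puts outside a face of `Ω`. The points having a coordinate above `e(h)` form an open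
neighbourhood of `|Ω|` which deforms into `|Ω|` by lowering all coordinates by `t • e(h)`, clipping
at `0` and renormalizing: at `t = 1` only coordinates above `e(h)` survive, and they lie in a face
of `Ω` realizing the minimum. Over the preimage of this neighbourhood the tensor map is therefore
homotopic to `|Δ ∘ s|` composed with a retraction, and both marginals of `|Δ ∘ s|` equal `|s|`;
so the two projections are homotopic there, which yields a local section of the path fibration.
As the carriers of `x` and `y` span a face of `K Π K`, these open sets cover `|K| × |K|`.
-/

open Finset

lemma isSimplicialMap_id_of_subset {V : Type} {K L : SC V} (h : K.faces ⊆ L.faces) :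
    IsSimplicialMap K L id := fun σ hσ => by
  simpa using h hσ

lemma isSimplicialMap_fst {V W : Type} (K : SC V) (L : SC W) :
    IsSimplicialMap (prodSC K L) K Prod.fst := fun _ hσ => hσ.1

lemma isSimplicialMap_snd {V W : Type} (K : SC V) (L : SC W) :
    IsSimplicialMap (prodSC K L) L Prod.snd := fun _ hσ => hσ.2

section Realization

variable {V W X : Type} [Fintype V] [Fintype W] [Fintype X]

noncomputable def carrier (f : V → ℝ) : Finset V := univ.filter (f · ≠ 0)

lemma mem_carrier {f : V → ℝ} {v : V} : v ∈ carrier f ↔ f v ≠ 0 := by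
  simp [carrier]

lemma mem_stdSimplex_of_mem_geomReal {K : SC V} {f : V → ℝ} (hf : f ∈ geomReal K) :
    f ∈ stdSimplex ℝ V :=
  ⟨hf.1, hf.2.1⟩

lemma mem_geomReal_of_carrier_subset {K : SC V} {f : V → ℝ} {σ : Finset V}
    (hf : f ∈ stdSimplex ℝ V) (hσ : σ ∈ K.faces) (hfσ : carrier f ⊆ σ) : f ∈ geomReal K :=
  ⟨hf.1, hf.2, σ, hσ, fun _ hv => hfσ (mem_carrier.2 hv)⟩

lemma carrier_nonempty {f : V → ℝ} (hf : f ∈ stdSimplex ℝ V) : (carrier f).Nonempty := by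
  by_contra h
  have hzero : ∀ v, f v = 0 := fun v => by
    by_contra hv
    exact h ⟨v, mem_carrier.2 hv⟩
  simpa [hzero] using hf.2

lemma carrier_mem_faces {K : SC V} {f : V → ℝ} (hf : f ∈ geomReal K) : carrier f ∈ K.faces := by
  obtain ⟨hf0, hf1, σ, hσ, hfσ⟩ := hf
  exact K.down_closed hσ (fun v hv => hfσ v (mem_carrier.1 hv)) (carrier_nonempty ⟨hf0, hf1⟩)

lemma carrier_map_subset (f : V → W) (x : V → ℝ) :
    carrier (FunOnFinite.map f x) ⊆ (carrier x).image f := by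
  intro w hw
  rw [mem_carrier, FunOnFinite.map_apply_apply] at hw
  obtain ⟨v, hv, hxv⟩ := exists_ne_zero_of_sum_ne_zero hw
  exact mem_image.2 ⟨v, mem_carrier.2 hxv, (mem_filter.1 hv).2⟩

lemma map_mem_stdSimplex (f : V → W) {x : V → ℝ} (hx : x ∈ stdSimplex ℝ V) :
    FunOnFinite.map f x ∈ stdSimplex ℝ W :=
  stdSimplex.image_linearMap f ⟨x, hx, rfl⟩

lemma map_mem_geomReal {K : SC V} {L : SC W} {f : V → W} (hf : IsSimplicialMap K L f)
    {x : V → ℝ} (hx : x ∈ geomReal K) : FunOnFinite.map f x ∈ geomReal L :=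
  mem_geomReal_of_carrier_subset (map_mem_stdSimplex f (mem_stdSimplex_of_mem_geomReal hx))
    (hf _ (carrier_mem_faces hx)) (carrier_map_subset f x)

noncomputable def realize {K : SC V} {L : SC W} {f : V → W} (hf : IsSimplicialMap K L f) :
    C(geomReal K, geomReal L) :=
  ⟨fun x => ⟨FunOnFinite.map f x, map_mem_geomReal hf x.2⟩,
    ((FunOnFinite.continuous_map ℝ f).comp continuous_subtype_val).subtype_mk _⟩

@[simp]
lemma coe_realize_apply {K : SC V} {L : SC W} {f : V → W} (hf : IsSimplicialMap K L f)
    (x : geomReal K) : (realize hf x : W → ℝ) = FunOnFinite.map f x :=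
  rfl

lemma realize_comp_realize {K : SC V} {L : SC W} {M : SC X} {f : V → W} {g : W → X} {k : V → X}
    (hg : IsSimplicialMap L M g) (hf : IsSimplicialMap K L f) (hk : IsSimplicialMap K M k)
    (hgf : g ∘ f = k) : (realize hg).comp (realize hf) = realize hk := by
  ext x : 2
  simp [← hgf, FunOnFinite.map_comp]

end Realization

section Contiguity

lemma Contiguous.isSimplicialMap_left {V W : Type} {K : SC V} {L : SC W} {f g : V → W}
    (h : Contiguous K L f g) : IsSimplicialMap K L f := fun σ hσ => by
  obtain rfl | hne := σ.eq_empty_or_nonempty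
  · simpa using h ∅ hσ
  · exact L.down_closed (h σ hσ) subset_union_left (hne.image f)

lemma ContigClass.isSimplicialMap_left {V W : Type} {K : SC V} {L : SC W} {f g : V → W}
    (h : ContigClass K L f g) (hg : IsSimplicialMap K L g) : IsSimplicialMap K L f := by
  obtain rfl | ⟨_, hf, -⟩ := h.cases_head
  exacts [hg, hf.isSimplicialMap_left]

lemma ContinuousMap.homotopic_of_forall_mem {Y Z : Type} [TopologicalSpace Y]
    [TopologicalSpace Z] {S : Set Z} {f g : C(Y, S)} (H : unitInterval × Y → Z)
    (hH : Continuous H) (hHS : ∀ q, H q ∈ S) (h0 : ∀ y, H (0, y) = f y)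
    (h1 : ∀ y, H (1, y) = g y) : f.Homotopic g :=
  ⟨{ toFun := fun q => ⟨H q, hHS q⟩
     continuous_toFun := hH.subtype_mk _
     map_zero_left := fun y => Subtype.ext (h0 y)
     map_one_left := fun y => Subtype.ext (h1 y) }⟩

variable {V W : Type} [Fintype V] [Fintype W] {K : SC V} {L : SC W}

lemma Contiguous.homotopic {f g : V → W} (h : Contiguous K L f g) (hf : IsSimplicialMap K L f)
    (hg : IsSimplicialMap K L g) : (realize hf).Homotopic (realize hg) := by
  have hF : Continuous fun q : unitInterval × geomReal K => (realize hf q.2 : W → ℝ) :=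
    continuous_subtype_val.comp ((realize hf).continuous.comp continuous_snd)
  have hG : Continuous fun q : unitInterval × geomReal K => (realize hg q.2 : W → ℝ) :=
    continuous_subtype_val.comp ((realize hg).continuous.comp continuous_snd)
  have ht : Continuous fun q : unitInterval × geomReal K => (q.1 : ℝ) :=
    continuous_subtype_val.comp continuous_fst
  refine ContinuousMap.homotopic_of_forall_mem
    (fun q => (1 - (q.1 : ℝ)) • (realize hf q.2 : W → ℝ) + (q.1 : ℝ) • (realize hg q.2 : W → ℝ))
    (((continuous_const.sub ht).smul hF).add (ht.smul hG)) (fun ⟨t, x⟩ => ?_)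
    (fun x => by simp) (fun x => by simp)
  have hx := mem_stdSimplex_of_mem_geomReal x.2
  refine mem_geomReal_of_carrier_subset ?_ (h _ (carrier_mem_faces x.2)) fun w hw => ?_
  · exact convex_stdSimplex ℝ W (map_mem_stdSimplex f hx) (map_mem_stdSimplex g hx)
      (sub_nonneg.2 t.2.2) t.2.1 (sub_add_cancel 1 _)
  · have : FunOnFinite.map f (x : V → ℝ) w ≠ 0 ∨ FunOnFinite.map g (x : V → ℝ) w ≠ 0 := by
      by_contra! h0
      simp [mem_carrier, h0] at hw
    rcases this with hfw | hgw
    · exact mem_union_left _ (carrier_map_subset f x (mem_carrier.2 hfw))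
    · exact mem_union_right _ (carrier_map_subset g x (mem_carrier.2 hgw))

lemma ContigClass.homotopic {f g : V → W} (h : ContigClass K L f g)
    (hf : IsSimplicialMap K L f) (hg : IsSimplicialMap K L g) :
    (realize hf).Homotopic (realize hg) := by
  induction h with
  | refl => rfl
  | tail _ hbc ih => exact (ih hbc.isSimplicialMap_left).trans (hbc.homotopic _ hg)

end Contiguity

section Tensor

variable {V W : Type} [Fintype V] [Fintype W]

def tensor (f : V → ℝ) (g : W → ℝ) : V × W → ℝ := fun p => f p.1 * g p.2

lemma carrier_tensor (f : V → ℝ) (g : W → ℝ) : carrier (tensor f g) = carrier f ×ˢ carrier g := by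
  ext p
  simp [mem_carrier, tensor]

lemma tensor_mem_stdSimplex {f : V → ℝ} {g : W → ℝ} (hf : f ∈ stdSimplex ℝ V)
    (hg : g ∈ stdSimplex ℝ W) : tensor f g ∈ stdSimplex ℝ (V × W) :=
  ⟨fun p => mul_nonneg (hf.1 p.1) (hg.1 p.2), by
    simp only [tensor, Fintype.sum_prod_type, ← mul_sum, hg.2, mul_one, hf.2]⟩

lemma map_fst_tensor (f : V → ℝ) {g : W → ℝ} (hg : ∑ w, g w = 1) :
    FunOnFinite.map Prod.fst (tensor f g) = f := by
  ext v
  simp [FunOnFinite.map_apply_apply, tensor, sum_filter, Fintype.sum_prod_type, ← mul_sum, hg]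

lemma map_snd_tensor {f : V → ℝ} (g : W → ℝ) (hf : ∑ v, f v = 1) :
    FunOnFinite.map Prod.snd (tensor f g) = g := by
  ext w
  simp [FunOnFinite.map_apply_apply, tensor, sum_filter, Fintype.sum_prod_type, ← sum_mul, hf]

lemma tensor_mem_geomReal {f : V → ℝ} {g : W → ℝ} {M : SC (V × W)} (hf : f ∈ stdSimplex ℝ V)
    (hg : g ∈ stdSimplex ℝ W) (hM : carrier f ×ˢ carrier g ∈ M.faces) :
    tensor f g ∈ geomReal M :=
  mem_geomReal_of_carrier_subset (tensor_mem_stdSimplex hf hg) hM (carrier_tensor f g).le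

lemma carrier_product_mem_prodSC {K : SC V} {L : SC W} {f : V → ℝ} {g : W → ℝ}
    (hf : f ∈ geomReal K) (hg : g ∈ geomReal L) :
    carrier f ×ˢ carrier g ∈ (prodSC K L).faces := by
  constructor
  · rw [product_image_fst (carrier_nonempty (mem_stdSimplex_of_mem_geomReal hg))]
    exact carrier_mem_faces hf
  · rw [product_image_snd (carrier_nonempty (mem_stdSimplex_of_mem_geomReal hf))]
    exact carrier_mem_faces hg

variable (K : SC V) (L : SC W)

noncomputable def tensorMap : C(geomReal K × geomReal L, geomReal (prodSC K L)) :=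
  ⟨fun x => ⟨tensor x.1 x.2, tensor_mem_geomReal (mem_stdSimplex_of_mem_geomReal x.1.2)
      (mem_stdSimplex_of_mem_geomReal x.2.2) (carrier_product_mem_prodSC x.1.2 x.2.2)⟩, by
    refine Continuous.subtype_mk (continuous_pi fun p => ?_) _
    exact ((continuous_apply p.1).comp (continuous_subtype_val.comp continuous_fst)).mul
      ((continuous_apply p.2).comp (continuous_subtype_val.comp continuous_snd))⟩

lemma realize_fst_comp_tensorMap :
    (realize (isSimplicialMap_fst K L)).comp (tensorMap K L) = ContinuousMap.fst := by
  ext x : 2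
  exact map_fst_tensor _ (mem_stdSimplex_of_mem_geomReal x.2.2).2

lemma realize_snd_comp_tensorMap :
    (realize (isSimplicialMap_snd K L)).comp (tensorMap K L) = ContinuousMap.snd := by
  ext x : 2
  exact map_snd_tensor _ (mem_stdSimplex_of_mem_geomReal x.1.2).2

end Tensor

section Truncation

variable {A : Type} [Fintype A]

noncomputable def truncate (c : ℝ) (h : A → ℝ) : A → ℝ :=
  fun p => max (h p - c) 0 / ∑ q, max (h q - c) 0

lemma sum_max_sub_pos {c : ℝ} {h : A → ℝ} (hc : ∃ q, c < h q) :
    0 < ∑ q, max (h q - c) 0 := by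
  obtain ⟨q, hq⟩ := hc
  calc 0 < max (h q - c) 0 := lt_max_of_lt_left (sub_pos.2 hq)
    _ ≤ ∑ q, max (h q - c) 0 :=
      single_le_sum (f := fun q => max (h q - c) 0) (fun _ _ => le_max_right _ _) (mem_univ q)

lemma truncate_mem_stdSimplex {c : ℝ} {h : A → ℝ} (hc : ∃ q, c < h q) :
    truncate c h ∈ stdSimplex ℝ A := by
  have hpos := sum_max_sub_pos hc
  refine ⟨fun p => div_nonneg (le_max_right _ _) hpos.le, ?_⟩
  simp only [truncate, ← sum_div, div_self hpos.ne']

lemma lt_of_truncate_ne_zero {c : ℝ} {h : A → ℝ} {p : A} (hp : truncate c h p ≠ 0) : c < h p := by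
  by_contra! hle
  simp [truncate, max_eq_right (sub_nonpos.2 hle)] at hp

lemma truncate_zero {h : A → ℝ} (hh : h ∈ stdSimplex ℝ A) : truncate 0 h = h := by
  ext p
  simp [truncate, max_eq_left (hh.1 _), hh.2]

lemma Continuous.truncate {Y : Type} [TopologicalSpace Y] {c : Y → ℝ} {h : Y → A → ℝ}
    (hc : Continuous c) (hh : Continuous h) (hlt : ∀ y, ∃ q, c y < h y q) :
    Continuous fun y => _root_.truncate (c y) (h y) := by
  have hmax : ∀ p, Continuous fun y => max (h y p - c y) 0 := fun p =>
    (((continuous_apply p).comp hh).sub hc).max continuous_const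
  exact continuous_pi fun p => (hmax p).div (continuous_finsetSum _ fun q _ => hmax q)
    fun y => (sum_max_sub_pos (hlt y)).ne'

end Truncation

namespace SC

variable {A : Type} [Fintype A] (M : SC A) (hM : M.faces.Nonempty)

noncomputable def excess (h : A → ℝ) : ℝ :=
  (Set.toFinite M.faces).toFinset.inf' ((Set.toFinite M.faces).toFinset_nonempty.2 hM)
    fun τ => ∑ q ∈ τᶜ, h q

lemma continuous_excess : Continuous (M.excess hM) :=
  Continuous.finset_inf'_apply _ fun _ _ => continuous_finsetSum _ fun q _ => continuous_apply q

variable {M} {h : A → ℝ}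

lemma excess_le {τ : Finset A} (hτ : τ ∈ M.faces) : M.excess hM h ≤ ∑ q ∈ τᶜ, h q :=
  inf'_le _ ((Set.toFinite _).mem_toFinset.2 hτ)

lemma excess_nonneg (hh : ∀ p, 0 ≤ h p) : 0 ≤ M.excess hM h :=
  le_inf' _ _ fun _ _ => sum_nonneg fun q _ => hh q

lemma exists_excess_lt_of_mem_geomReal (hh : h ∈ geomReal M) : ∃ q, M.excess hM h < h q := by
  obtain ⟨q, hq⟩ := carrier_nonempty (mem_stdSimplex_of_mem_geomReal hh)
  have hzero : ∑ p ∈ (carrier h)ᶜ, h p = 0 :=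
    sum_eq_zero fun p hp => by simpa [mem_carrier] using hp
  refine ⟨q, (excess_le hM (carrier_mem_faces hh)).trans_lt ?_⟩
  exact hzero ▸ lt_of_le_of_ne (hh.1 q) (Ne.symm (mem_carrier.1 hq))

lemma exists_face_of_excess_lt (hh : ∀ p, 0 ≤ h p) :
    ∃ τ ∈ M.faces, ∀ p, M.excess hM h < h p → p ∈ τ := by
  obtain ⟨τ, hτ, he⟩ := exists_mem_eq_inf' ((Set.toFinite M.faces).toFinset_nonempty.2 hM)
    fun τ => ∑ q ∈ τᶜ, h q
  refine ⟨τ, (Set.toFinite _).mem_toFinset.1 hτ, fun p hp => ?_⟩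
  by_contra hpτ
  refine (single_le_sum (fun q _ => hh q) (mem_compl.2 hpτ)).not_gt ?_
  exact he ▸ hp

end SC

theorem exists_nhds_deformation_geomReal {A : Type} [Fintype A] {M N : SC A}
    (hid : IsSimplicialMap M N id) :
    ∃ U : Set (A → ℝ), IsOpen U ∧ geomReal M ⊆ U ∧
      ∀ {Y : Type} [TopologicalSpace Y] (g : C(Y, geomReal N)), (∀ y, (g y : A → ℝ) ∈ U) →
        ∃ r : C(Y, geomReal M), g.Homotopic ((realize hid).comp r) := by
  rcases M.faces.eq_empty_or_nonempty with hM | hM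
  · refine ⟨∅, isOpen_empty, fun x ⟨_, _, σ, hσ, _⟩ => by simp [hM] at hσ, fun g hg => ?_⟩
    have : IsEmpty _ := ⟨fun y => hg y⟩
    exact ⟨⟨isEmptyElim, continuous_of_discreteTopology⟩, by rw [Subsingleton.elim g]⟩
  refine ⟨{h | ∃ q, M.excess hM h < h q}, ?_, fun _ => M.exists_excess_lt_of_mem_geomReal hM,
    fun {Y} _ g hg => ?_⟩
  · simp only [Set.ofPred_exists]
    exact isOpen_iUnion fun q => isOpen_lt (M.continuous_excess hM) (continuous_apply q)
  set e := fun y => M.excess hM (g y)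
  have hg0 : ∀ y p, 0 ≤ (g y : A → ℝ) p := fun y => (g y).2.1
  have he0 : ∀ y, 0 ≤ e y := fun y => M.excess_nonneg hM (hg0 y)
  have hgc : Continuous fun y => (g y : A → ℝ) := continuous_subtype_val.comp g.continuous
  have hec : Continuous e := (M.continuous_excess hM).comp hgc
  have hlt : ∀ q : unitInterval × Y, ∃ p, q.1 * e q.2 < (g q.2 : A → ℝ) p := fun ⟨t, y⟩ =>
    (hg y).imp fun p hp => (mul_le_of_le_one_left (he0 y) t.2.2).trans_lt hp
  have hr : ∀ y, truncate (e y) (g y) ∈ geomReal M := fun y => by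
    obtain ⟨τ, hτ, hsub⟩ := M.exists_face_of_excess_lt hM (hg0 y)
    exact mem_geomReal_of_carrier_subset (truncate_mem_stdSimplex (hg y)) hτ
      fun p hp => hsub p (lt_of_truncate_ne_zero (mem_carrier.1 hp))
  refine ⟨⟨fun y => ⟨_, hr y⟩, ((hec.truncate hgc hg).subtype_mk _)⟩,
    ContinuousMap.homotopic_of_forall_mem (fun q => truncate (q.1 * e q.2) (g q.2))
      (((continuous_subtype_val.comp continuous_fst).mul (hec.comp continuous_snd)).truncate
        (hgc.comp continuous_snd) hlt) (fun ⟨t, y⟩ => ?_) (fun y => ?_) (fun y => ?_)⟩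
  · refine mem_geomReal_of_carrier_subset (truncate_mem_stdSimplex (hlt (t, y)))
      (carrier_mem_faces (g y).2) fun p hp => mem_carrier.2 ?_
    exact ((mul_nonneg t.2.1 (he0 y)).trans_lt (lt_of_truncate_ne_zero (mem_carrier.1 hp))).ne'
  · simp [truncate_zero (mem_stdSimplex_of_mem_geomReal (g y).2)]
  · simp [FunOnFinite.map_id]

lemma exists_section_pathFib_of_homotopic {X Y : Type} [TopologicalSpace X] [TopologicalSpace Y]
    {f g : C(Y, X)} (h : f.Homotopic g) :
    ∃ s : Y → C(unitInterval, X), Continuous s ∧ ∀ y, pathFib X (s y) = (f y, g y) := by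
  obtain ⟨H⟩ := h
  exact ⟨(H.toContinuousMap.comp ContinuousMap.prodSwap).curry, map_continuous _,
    fun y => Prod.ext (H.apply_zero y) (H.apply_one y)⟩

theorem exists_open_section_of_isFarber {V : Type} [Fintype V] {K : SC V} {Ω : SC (V × V)}
    (hΩ : IsFarber K Ω) :
    ∃ U : Set (geomReal K × geomReal K), IsOpen U ∧
      (∀ x : geomReal K × geomReal K, tensor (x.1 : V → ℝ) x.2 ∈ geomReal Ω → x ∈ U) ∧
      ∃ s : U → C(unitInterval, geomReal K), Continuous s ∧ ∀ y, pathFib _ (s y) = y := by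
  obtain ⟨hsub, s, hs, hclass⟩ := hΩ
  have hid := isSimplicialMap_id_of_subset hsub
  have hdiag := hclass.isSimplicialMap_left hid
  obtain ⟨N, hNopen, hΩN, hdeform⟩ := exists_nhds_deformation_geomReal hid
  set U := {x | (tensorMap K K x : V × V → ℝ) ∈ N}
  let ι : C(U, geomReal K × geomReal K) := ⟨Subtype.val, continuous_subtype_val⟩
  obtain ⟨r, hr⟩ := hdeform ((tensorMap K K).comp ι) fun y => y.2
  have hΔ : ((tensorMap K K).comp ι).Homotopic ((realize hdiag).comp r) :=
    hr.trans ((hclass.homotopic hdiag hid).symm.comp (.refl r))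
  have hfst : (ContinuousMap.fst.comp ι).Homotopic ((realize hs).comp r) := by
    have := (ContinuousMap.Homotopic.refl (realize (isSimplicialMap_fst K K))).comp hΔ
    rwa [← ContinuousMap.comp_assoc, realize_fst_comp_tensorMap, ← ContinuousMap.comp_assoc,
      realize_comp_realize (isSimplicialMap_fst K K) hdiag hs rfl] at this
  have hsnd : (ContinuousMap.snd.comp ι).Homotopic ((realize hs).comp r) := by
    have := (ContinuousMap.Homotopic.refl (realize (isSimplicialMap_snd K K))).comp hΔ
    rwa [← ContinuousMap.comp_assoc, realize_snd_comp_tensorMap, ← ContinuousMap.comp_assoc,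
      realize_comp_realize (isSimplicialMap_snd K K) hdiag hs rfl] at this
  exact ⟨U, hNopen.preimage (continuous_subtype_val.comp (tensorMap K K).continuous),
    fun x hx => hΩN hx, exists_section_pathFib_of_homotopic (hfst.trans hsnd.symm)⟩

theorem secatLe_pathFib_of_TCle {V : Type} [Fintype V] {K : SC V} {n : ℕ} (h : TCle K n) :
    SecatLe (pathFib (geomReal K)) n := by
  obtain ⟨Ω, hΩ, hcover⟩ := h
  choose U hUopen hUmem hsec using fun i => exists_open_section_of_isFarber (hΩ i)
  refine ⟨U, hUopen, fun x => ?_, hsec⟩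
  obtain ⟨i, hi⟩ := hcover _ (carrier_product_mem_prodSC x.1.2 x.2.2)
  exact ⟨i, hUmem i x (tensor_mem_geomReal (mem_stdSimplex_of_mem_geomReal x.1.2)
    (mem_stdSimplex_of_mem_geomReal x.2.2) hi)⟩

theorem TCtop_geomReal_le_TCdisc {V : Type} [Fintype V] (K : SC V) :
    TCtop (geomReal K) ≤ TCdisc K := by
  refine sInf_le_sInf ?_
  rintro _ ⟨m, rfl, hm⟩
  exact ⟨m, rfl, secatLe_pathFib_of_TCle hm⟩
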